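/- Fix α > 0 and a compact set K ⊂ (-2,2). There exists C > 0 such that for every integer N ≥ 1 and every x ∈ K, |∫₀ˣ (e^{α²u²/8}/(4-u²)^{1/4}) cos( ((N+α²)/4)·u√(4-u²) - N·arccos(u/2) - (3/2)·arcsin(u/2) ) du| ≤ C/N. -/

import Mathlib

open Real MeasureTheory


namespace OscAux

noncomputable def s (u : ℝ) : ℝ := Real.sqrt (4 - u^2)
noncomputable def g (a n u : ℝ) : ℝ := n*(4-u^2)/2 + a*(2-u^2)/2 - 3/2
noncomputable def P (a n u : ℝ) : ℝ := g a n u / s u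
noncomputable def Pd (a n u : ℝ) : ℝ :=
  ((-(n+a)*u) * s u - g a n u * (-u / s u)) / (s u)^2
noncomputable def ph (a n u : ℝ) : ℝ :=
  (n+a)/4*(u*s u) - n*Real.arccos (u/2) - 3/2*Real.arcsin (u/2)
noncomputable def f (a u : ℝ) : ℝ := Real.exp (a*u^2/8) / (4-u^2)^((1:ℝ)/4)
noncomputable def fd (a u : ℝ) : ℝ :=
  ((Real.exp (a*u^2/8) * (a*u/4)) * (4-u^2)^((1:ℝ)/4)
    - Real.exp (a*u^2/8) * ((-(2*u)) * ((1:ℝ)/4) * (4-u^2)^((1:ℝ)/4 - 1)))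
    / ((4-u^2)^((1:ℝ)/4))^2
noncomputable def F (a n u : ℝ) : ℝ := f a u / P a n u
noncomputable def Fd (a n u : ℝ) : ℝ :=
  (fd a u * P a n u - f a u * Pd a n u) / (P a n u)^2

variable {a n u : ℝ}

lemma s_pos (hu : u^2 < 4) : 0 < s u := Real.sqrt_pos.2 (by linarith)

lemma s_sq (hu : u^2 < 4) : s u ^ 2 = 4 - u^2 := Real.sq_sqrt (by linarith)

lemma s_le_two (hu : u^2 < 4) : s u ≤ 2 := by
  rw [show (2:ℝ) = Real.sqrt 4 by
    rw [show (4:ℝ) = 2^2 by norm_num, Real.sqrt_sq]; norm_num]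
  exact Real.sqrt_le_sqrt (by nlinarith [sq_nonneg u])

lemma hasDerivAt_sq : HasDerivAt (fun u : ℝ => 4 - u^2) (-(2*u)) u := by
  simpa using ((hasDerivAt_pow 2 u).const_sub 4)

lemma hasDerivAt_s (hu : u^2 < 4) : HasDerivAt s (-u / s u) u := by
  have h := (Real.hasDerivAt_sqrt (by linarith : (4 - u^2) ≠ 0)).comp u hasDerivAt_sq
  refine h.congr_deriv ?_
  have hs := s_pos hu
  field_simp [s] at *
  rw [show √(4 - u^2) = s u from rfl, mul_div_cancel_right₀ u hs.ne']

lemma hasDerivAt_g : HasDerivAt (g a n) (-(n+a)*u) u := by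
  have h2 : HasDerivAt (fun u : ℝ => 2 - u^2) (-(2*u)) u := by
    simpa using ((hasDerivAt_pow 2 u).const_sub 2)
  have h := (((hasDerivAt_sq (u := u)).const_mul n).div_const 2).add
    ((h2.const_mul a).div_const 2) |>.sub_const (3/2)
  unfold g
  refine h.congr_deriv ?_
  ring

lemma hasDerivAt_P (hu : u^2 < 4) : HasDerivAt (P a n) (Pd a n u) u :=
  hasDerivAt_g.div (hasDerivAt_s hu) (ne_of_gt (s_pos hu))

lemma sqrt_half (hu : u^2 < 4) : Real.sqrt (1 - (u/2)^2) = s u / 2 := by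
  rw [s, show (4:ℝ) - u^2 = 2^2 * (1 - (u/2)^2) by ring,
    Real.sqrt_mul (by positivity), Real.sqrt_sq (by norm_num : (0:ℝ) ≤ 2)]
  ring

lemma hasDerivAt_ph (hu : u^2 < 4) : HasDerivAt (ph a n) (P a n u) u := by
  have h2 : u/2 ≠ -1 := by intro h; nlinarith [sq_nonneg (u+2)]
  have h2' : u/2 ≠ 1 := by intro h; nlinarith [sq_nonneg (u-2)]
  have hhalf : HasDerivAt (fun u : ℝ => u/2) (1/2) u := (hasDerivAt_id u).div_const 2
  have hac : HasDerivAt (fun u : ℝ => Real.arccos (u/2))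
      (-(1 / Real.sqrt (1 - (u/2)^2)) * (1/2)) u :=
    by have := (Real.hasDerivAt_arccos h2 h2').comp u hhalf; exact this
  have has : HasDerivAt (fun u : ℝ => Real.arcsin (u/2))
      ((1 / Real.sqrt (1 - (u/2)^2)) * (1/2)) u :=
    by have := (Real.hasDerivAt_arcsin h2 h2').comp u hhalf; exact this
  have hus : HasDerivAt (fun u : ℝ => u * s u) (1 * s u + u * (-u / s u)) u :=
    (hasDerivAt_id u).mul (hasDerivAt_s hu)
  have h := ((hus.const_mul ((n+a)/4)).sub (hac.const_mul n)).sub (has.const_mul (3/2))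
  unfold ph
  refine h.congr_deriv ?_
  rw [sqrt_half hu]
  have hs := s_pos hu
  have hsq : s u * s u = 4 - u^2 := by have := s_sq hu; nlinarith [this]
  rw [P, g]
  field_simp
  linear_combination (2*(n+a)) * hsq

lemma hasDerivAt_f (hu : u^2 < 4) : HasDerivAt (f a) (fd a u) u := by
  have hbpos : (0:ℝ) < 4 - u^2 := by linarith
  have he : HasDerivAt (fun u : ℝ => Real.exp (a*u^2/8)) (Real.exp (a*u^2/8) * (a*u/4)) u := by
    have harg : HasDerivAt (fun u : ℝ => a*u^2/8) (a*u/4) u := by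
      have := ((hasDerivAt_pow 2 u).const_mul a).div_const 8
      refine this.congr_deriv ?_; ring
    exact harg.exp
  have hw : HasDerivAt (fun u : ℝ => (4-u^2)^((1:ℝ)/4))
      ((-(2*u)) * ((1:ℝ)/4) * (4-u^2)^((1:ℝ)/4 - 1)) u :=
    hasDerivAt_sq.rpow_const (Or.inl (ne_of_gt hbpos))
  have hwne : (4-u^2)^((1:ℝ)/4) ≠ 0 := ne_of_gt (Real.rpow_pos_of_pos hbpos _)
  exact he.div hw hwne

lemma hasDerivAt_F (hu : u^2 < 4) (hP : P a n u ≠ 0) :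
    HasDerivAt (F a n) (Fd a n u) u :=
  (hasDerivAt_f hu).div (hasDerivAt_P hu) hP

end OscAux

namespace OscAux
variable {a n u : ℝ}

lemma continuous_s : Continuous s :=
  Real.continuous_sqrt.comp (by continuity)

lemma continuous_g : Continuous (g a n) := by unfold g; continuity

lemma continuousAt_P (hu : u^2 < 4) : ContinuousAt (P a n) u :=
  continuous_g.continuousAt.div continuous_s.continuousAt (ne_of_gt (s_pos hu))

lemma continuousAt_Pd (hu : u^2 < 4) : ContinuousAt (Pd a n) u := by
  have hs := ne_of_gt (s_pos hu)
  apply ContinuousAt.div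
  · exact ((continuousAt_const.mul continuousAt_id).mul continuous_s.continuousAt).sub
      (continuous_g.continuousAt.mul ((continuousAt_id.neg).div continuous_s.continuousAt hs))
  · exact continuous_s.continuousAt.pow 2
  · positivity
lemma continuousAt_rpow14 (hu : u^2 < 4) :
    ContinuousAt (fun u : ℝ => (4-u^2)^((1:ℝ)/4)) u := by
  have hb : (4:ℝ) - u^2 ≠ 0 := by linarith
  exact (continuousAt_const.sub (continuousAt_pow u 2)).rpow_const (Or.inl hb)

lemma continuousAt_f (hu : u^2 < 4) : ContinuousAt (f a) u := by
  have hb : (0:ℝ) < 4 - u^2 := by linarith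
  exact (Real.continuous_exp.continuousAt.comp (by fun_prop)).div (continuousAt_rpow14 hu)
    (ne_of_gt (Real.rpow_pos_of_pos hb _))

lemma continuousAt_fd (hu : u^2 < 4) : ContinuousAt (fd a) u := by
  have hb : (0:ℝ) < 4 - u^2 := by linarith
  have he : ContinuousAt (fun u : ℝ => Real.exp (a*u^2/8)) u :=
    Real.continuous_exp.continuousAt.comp (by fun_prop)
  have hr : ContinuousAt (fun u : ℝ => (4-u^2)^((1:ℝ)/4 - 1)) u :=
    (continuousAt_const.sub (continuousAt_pow u 2)).rpow_const (Or.inl (ne_of_gt hb))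
  apply ContinuousAt.div
  · exact ((he.mul (by fun_prop)).mul (continuousAt_rpow14 hu)).sub
      ((he.mul ((by fun_prop : ContinuousAt (fun u:ℝ => -(2*u) * ((1:ℝ)/4)) u).mul hr)))
  · exact (continuousAt_rpow14 hu).pow 2
  · exact pow_ne_zero 2 (ne_of_gt (Real.rpow_pos_of_pos hb _))

lemma continuousAt_F (hu : u^2 < 4) (hP : P a n u ≠ 0) : ContinuousAt (F a n) u :=
  (continuousAt_f hu).div (continuousAt_P hu) hP

lemma continuousAt_Fd (hu : u^2 < 4) (hP : P a n u ≠ 0) : ContinuousAt (Fd a n) u :=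
  (((continuousAt_fd hu).mul (continuousAt_P hu)).sub
    ((continuousAt_f hu).mul (continuousAt_Pd hu))).div ((continuousAt_P hu).pow 2)
    (pow_ne_zero 2 hP)

lemma continuous_ph : Continuous (ph a n) := by
  unfold ph
  exact ((continuous_const.mul (continuous_id.mul continuous_s)).sub
    (continuous_const.mul (Real.continuous_arccos.comp (by continuity)))).sub
    (continuous_const.mul (Real.continuous_arcsin.comp (by continuity)))

end OscAux


set_option maxHeartbeats 2000000 in
open intervalIntegral Set in
lemma OscAux.key (a : ℝ) (ha : 0 < a) (m : ℝ) (hm0 : 0 ≤ m) (hm2 : m < 2)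
    (Mf Mg : ℝ) (hMf1 : 1 ≤ Mf) (hMg1 : 1 ≤ Mg)
    (hMf : ∀ u ∈ Icc (-m) m, |OscAux.f a u| ≤ Mf)
    (hMg : ∀ u ∈ Icc (-m) m, |OscAux.fd a u| ≤ Mg)
    (δ A D C₄ : ℝ)
    (hδdef : δ = 4 - m^2) (hA : A = 2 + a + 3/2)
    (hD : D = (4*(1+a)+2*A/Real.sqrt δ)/δ)
    (hC₄ : C₄ = (Mg*A/Real.sqrt δ + Mf*D)*64/δ^2)
    (n : ℝ) (hn1 : 1 ≤ n) (hn : 4*(a+3/2)/δ ≤ n)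
    (x : ℝ) (hx : |x| ≤ m) :
    |∫ u in (0:ℝ)..x, OscAux.f a u * Real.cos (OscAux.ph a n u)|
      ≤ (16*Mf/δ + 2*C₄)/n := by
  open OscAux in
  have hδ : 0 < δ := by nlinarith
  have hsδ : 0 < Real.sqrt δ := Real.sqrt_pos.2 hδ
  have hn0 : 0 < n := by linarith
  have hMf0 : 0 < Mf := by linarith
  have hMg0 : 0 < Mg := by linarith
  have hApos : 0 < A := by rw [hA]; positivity
  have hDpos : 0 < D := by rw [hD]; positivity
  have hC₄pos : 0 < C₄ := by rw [hC₄]; positivity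
  -- pointwise facts on Icc (-m) m
  have hmem : ∀ u ∈ Icc (-m) m, u^2 < 4 ∧ δ ≤ 4 - u^2 := by
    intro u hu
    have h1 : |u| ≤ m := abs_le.2 ⟨hu.1, hu.2⟩
    have h2 : u^2 ≤ m^2 := by nlinarith [abs_nonneg u, sq_abs u]
    exact ⟨by nlinarith, by rw [hδdef]; nlinarith⟩
  have hnδ : 4*(a+3/2) ≤ n * δ := by
    rw [div_le_iff₀ hδ] at hn; linarith
  have hg_lb : ∀ u ∈ Icc (-m) m, n*δ/4 ≤ g a n u := by
    intro u hu
    obtain ⟨h4, hδle⟩ := hmem u hu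
    have e1 : n*δ ≤ n*(4-u^2) := mul_le_mul_of_nonneg_left hδle hn0.le
    have e2 : -2*a ≤ a*(2-u^2) := by nlinarith
    rw [g]; linarith
  have hg_ub : ∀ u ∈ Icc (-m) m, |g a n u| ≤ n * A := by
    intro u hu
    obtain ⟨h4, _⟩ := hmem u hu
    have hlb := hg_lb u hu
    have e3 : n*(4-u^2) ≤ 4*n := by nlinarith [sq_nonneg u]
    have e4 : a*(2-u^2) ≤ 2*a := by nlinarith [sq_nonneg u]
    have e5 : a ≤ n*a := by nlinarith [mul_nonneg (sub_nonneg.2 hn1) ha.le]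
    rw [abs_le]
    constructor
    · rw [g]; nlinarith [mul_pos hn0 hApos, mul_pos hn0 hδ]
    · rw [g, hA]; nlinarith
  have hP_lb : ∀ u ∈ Icc (-m) m, n*δ/8 ≤ P a n u := by
    intro u hu
    obtain ⟨h4, _⟩ := hmem u hu
    rw [P, le_div_iff₀ (s_pos h4)]
    nlinarith [hg_lb u hu, mul_le_mul_of_nonneg_left (s_le_two h4)
      (by positivity : (0:ℝ) ≤ n*δ/8)]
  have hP_pos : ∀ u ∈ Icc (-m) m, 0 < P a n u := by
    intro u hu; have := hP_lb u hu; nlinarith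
  have hs_lb : ∀ u ∈ Icc (-m) m, Real.sqrt δ ≤ s u := by
    intro u hu
    exact Real.sqrt_le_sqrt (hmem u hu).2
  have hP_ub : ∀ u ∈ Icc (-m) m, P a n u ≤ n * A / Real.sqrt δ := by
    intro u hu
    obtain ⟨h4, _⟩ := hmem u hu
    rw [P, div_le_div_iff₀ (s_pos h4) hsδ]
    have h3 : g a n u ≤ n*A := (abs_le.1 (hg_ub u hu)).2
    nlinarith [mul_le_mul_of_nonneg_right h3 hsδ.le,
      mul_le_mul_of_nonneg_left (hs_lb u hu) (by positivity : (0:ℝ) ≤ n*A)]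
  have habs_u : ∀ u ∈ Icc (-m) m, |u| ≤ 2 := by
    intro u hu
    have : |u| ≤ m := abs_le.2 ⟨hu.1, hu.2⟩
    linarith
  have hPd_bd : ∀ u ∈ Icc (-m) m, |Pd a n u| ≤ n * D := by
    intro u hu
    obtain ⟨h4, hδle⟩ := hmem u hu
    have hsp := s_pos h4
    have hsl := hs_lb u hu
    have hs2 := s_le_two h4
    have hu2 := habs_u u hu
    rw [Pd, abs_div]
    have hden : δ ≤ |s u ^ 2| := by
      rw [abs_of_pos (by positivity), s_sq h4]; exact hδle
    have h1 : |(-(n+a)*u) * s u| ≤ n*(4*(1+a)) := by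
      rw [abs_mul, abs_mul, abs_neg, abs_of_pos (by linarith : (0:ℝ) < n + a),
        abs_of_pos hsp]
      have h9 : |u| * s u ≤ 4 := by
        calc |u| * s u ≤ 2 * 2 := mul_le_mul hu2 hs2 hsp.le (by norm_num)
          _ = 4 := by norm_num
      have e5 : a ≤ n*a := by nlinarith [mul_nonneg (sub_nonneg.2 hn1) ha.le]
      nlinarith [mul_le_mul_of_nonneg_left h9 (by linarith : (0:ℝ) ≤ n + a)]
    have h2 : |g a n u * (-u / s u)| ≤ n*(2*A/Real.sqrt δ) := by
      rw [abs_mul, abs_div, abs_neg, abs_of_pos hsp]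
      have hg := hg_ub u hu
      have h3 : |u| / s u ≤ 2 / Real.sqrt δ := div_le_div₀ (by norm_num) hu2 hsδ hsl
      calc |g a n u| * (|u| / s u) ≤ (n*A) * (2/Real.sqrt δ) :=
            mul_le_mul hg h3 (by positivity) (by positivity)
        _ = n*(2*A/Real.sqrt δ) := by ring
    have hnum : |(-(n+a)*u) * s u - g a n u * (-u / s u)|
        ≤ n*(4*(1+a)) + n*(2*A/Real.sqrt δ) :=
      le_trans (abs_sub _ _) (add_le_add h1 h2)
    calc |(-(n+a)*u) * s u - g a n u * (-u / s u)| / |s u ^ 2|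
        ≤ (n*(4*(1+a)) + n*(2*A/Real.sqrt δ)) / δ :=
          div_le_div₀ (by positivity) hnum hδ hden
      _ = n * D := by rw [hD]; field_simp
  -- F bounds
  have hF_bd : ∀ u ∈ Icc (-m) m, |F a n u| ≤ 8*Mf/(n*δ) := by
    intro u hu
    rw [F, abs_div, abs_of_pos (hP_pos u hu)]
    calc |f a u| / P a n u ≤ Mf / (n*δ/8) :=
          div_le_div₀ (by positivity) (hMf u hu) (by positivity) (hP_lb u hu)
      _ = 8*Mf/(n*δ) := by field_simp
  have hFd_bd : ∀ u ∈ Icc (-m) m, |Fd a n u| ≤ C₄/n := by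
    intro u hu
    rw [Fd, abs_div]
    have hPp := hP_pos u hu
    have t1 : |fd a u * P a n u| ≤ Mg*(n*A/Real.sqrt δ) := by
      rw [abs_mul, abs_of_pos hPp]
      exact mul_le_mul (hMg u hu) (hP_ub u hu) hPp.le (by linarith)
    have t2 : |f a u * Pd a n u| ≤ Mf*(n*D) := by
      rw [abs_mul]
      exact mul_le_mul (hMf u hu) (hPd_bd u hu) (abs_nonneg _) (by linarith)
    have hnum : |fd a u * P a n u - f a u * Pd a n u| ≤ Mg*(n*A/Real.sqrt δ) + Mf*(n*D) :=
      le_trans (abs_sub _ _) (add_le_add t1 t2)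
    have hden : (n*δ/8)^2 ≤ |P a n u ^ 2| := by
      rw [abs_of_pos (by positivity)]
      have := hP_lb u hu
      nlinarith [hPp]
    calc |fd a u * P a n u - f a u * Pd a n u| / |P a n u ^ 2|
        ≤ (Mg*(n*A/Real.sqrt δ) + Mf*(n*D)) / ((n*δ/8)^2) :=
          div_le_div₀ (by positivity) hnum (by positivity) hden
      _ = C₄/n := by rw [hC₄]; field_simp; ring
  have h0m : (0:ℝ) ∈ Icc (-m) m := by constructor <;> linarith
  have hxm : x ∈ Icc (-m) m := by
    have := abs_le.1 hx; exact ⟨this.1, this.2⟩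
  have hxsub : uIcc (0:ℝ) x ⊆ Icc (-m) m := uIcc_subset_Icc h0m hxm
  have hder_F : ∀ u ∈ uIcc (0:ℝ) x, HasDerivAt (F a n) (Fd a n u) u := fun u hu =>
    hasDerivAt_F (hmem u (hxsub hu)).1 (ne_of_gt (hP_pos u (hxsub hu)))
  have hder_v : ∀ u ∈ uIcc (0:ℝ) x,
      HasDerivAt (fun w => Real.sin (ph a n w)) (Real.cos (ph a n u) * P a n u) u :=
    fun u hu => (hasDerivAt_ph (hmem u (hxsub hu)).1).sin
  have hcFd : ContinuousOn (Fd a n) (uIcc (0:ℝ) x) := fun u hu =>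
    (continuousAt_Fd (hmem u (hxsub hu)).1
      (ne_of_gt (hP_pos u (hxsub hu)))).continuousWithinAt
  have hiFd : IntervalIntegrable (Fd a n) MeasureTheory.volume 0 x :=
    hcFd.intervalIntegrable
  have hcv : ContinuousOn (fun u => Real.cos (ph a n u) * P a n u) (uIcc (0:ℝ) x) :=
    fun u hu => (((Real.continuous_cos.comp continuous_ph).continuousAt).mul
      (continuousAt_P (hmem u (hxsub hu)).1)).continuousWithinAt
  have hiv : IntervalIntegrable (fun u => Real.cos (ph a n u) * P a n u)
      MeasureTheory.volume 0 x := hcv.intervalIntegrable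
  have hcongr : ∫ u in (0:ℝ)..x, f a u * Real.cos (ph a n u)
      = ∫ u in (0:ℝ)..x, F a n u * (Real.cos (ph a n u) * P a n u) := by
    apply intervalIntegral.integral_congr
    intro u hu
    have hP := ne_of_gt (hP_pos u (hxsub hu))
    simp only [F]
    field_simp
  have hIBP := intervalIntegral.integral_mul_deriv_eq_deriv_mul hder_F hder_v hiFd hiv
  rw [hcongr, hIBP]
  have b1 : ∀ w ∈ Icc (-m) m, |F a n w * Real.sin (ph a n w)| ≤ 8*Mf/(n*δ) := by
    intro w hw
    rw [abs_mul]
    calc |F a n w| * |Real.sin (ph a n w)| ≤ (8*Mf/(n*δ)) * 1 :=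
          mul_le_mul (hF_bd w hw) (Real.abs_sin_le_one _) (abs_nonneg _) (by positivity)
      _ = 8*Mf/(n*δ) := mul_one _
  have b3 : |∫ u in (0:ℝ)..x, Fd a n u * Real.sin (ph a n u)| ≤ C₄/n * |x - 0| := by
    rw [← Real.norm_eq_abs]
    apply intervalIntegral.norm_integral_le_of_norm_le_const
    intro u hu
    have hum := hxsub (uIoc_subset_uIcc hu)
    rw [Real.norm_eq_abs, abs_mul]
    calc |Fd a n u| * |Real.sin (ph a n u)| ≤ (C₄/n) * 1 :=
          mul_le_mul (hFd_bd u hum) (Real.abs_sin_le_one _) (abs_nonneg _) (by positivity)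
      _ = C₄/n := mul_one _
  have b3' : |∫ u in (0:ℝ)..x, Fd a n u * Real.sin (ph a n u)| ≤ C₄/n * 2 := by
    refine b3.trans ?_
    have : |x - 0| ≤ 2 := by rw [sub_zero]; linarith
    exact mul_le_mul_of_nonneg_left this (by positivity)
  calc |F a n x * Real.sin (ph a n x) - F a n 0 * Real.sin (ph a n 0)
        - ∫ u in (0:ℝ)..x, Fd a n u * Real.sin (ph a n u)|
      ≤ |F a n x * Real.sin (ph a n x) - F a n 0 * Real.sin (ph a n 0)|
        + |∫ u in (0:ℝ)..x, Fd a n u * Real.sin (ph a n u)| := abs_sub _ _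
    _ ≤ (|F a n x * Real.sin (ph a n x)| + |F a n 0 * Real.sin (ph a n 0)|)
        + C₄/n * 2 := add_le_add (abs_sub _ _) b3'
    _ ≤ (8*Mf/(n*δ) + 8*Mf/(n*δ)) + C₄/n * 2 :=
        add_le_add (add_le_add (b1 x hxm) (b1 0 h0m)) le_rfl
    _ = (16*Mf/δ + 2*C₄)/n := by field_simp; ring


open Set

/-- Lemma (oscillatory integral bound, cosine version): for fixed α > 0 and a compact
K ⊂ (-2,2), the integral ∫₀ˣ (e^{α²u²/8}/(4-u²)^{1/4})
cos(((N+α²)/4)u√(4-u²) - N arccos(u/2) - (3/2) arcsin(u/2)) du is O(1/N) uniformly on K. -/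
theorem oscillatory_integral_bound_cos (α : ℝ) (hα : 0 < α)
    (K : Set ℝ) (hK : IsCompact K) (hK2 : K ⊆ Set.Ioo (-2) 2) :
    ∃ C > (0:ℝ), ∀ N : ℕ, 1 ≤ N → ∀ x ∈ K,
      |∫ u in (0:ℝ)..x,
          Real.exp (α^2*u^2/8) / (4 - u^2)^((1:ℝ)/4) *
            Real.cos ((N + α^2)/4 * (u * Real.sqrt (4 - u^2))
              - N * Real.arccos (u/2) - (3/2) * Real.arcsin (u/2))|
        ≤ C / N := by
  rcases Set.eq_empty_or_nonempty K with hKe | hne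
  · exact ⟨1, one_pos, fun N hN x hx => by rw [hKe] at hx; exact absurd hx (Set.notMem_empty x)⟩
  have ha : 0 < α^2 := by positivity
  obtain ⟨z, hzK, hz⟩ := hK.exists_isMaxOn hne continuous_abs.continuousOn
  obtain ⟨m, hm⟩ : ∃ m, m = |z| := ⟨_, rfl⟩
  have hm0 : 0 ≤ m := hm ▸ abs_nonneg z
  have hm2 : m < 2 := by
    rw [hm, abs_lt]; exact ⟨(hK2 hzK).1, (hK2 hzK).2⟩
  have hKm : ∀ x ∈ K, |x| ≤ m := fun x hx => hm ▸ hz hx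
  have hmem4 : ∀ u ∈ Icc (-m) m, u^2 < 4 := by
    intro u hu
    have h1 : |u| ≤ m := abs_le.2 ⟨hu.1, hu.2⟩
    nlinarith [abs_nonneg u, sq_abs u]
  -- bounds for f and fd
  have hfc : ContinuousOn (OscAux.f (α^2)) (Icc (-m) m) := fun u hu =>
    (OscAux.continuousAt_f (hmem4 u hu)).continuousWithinAt
  have hgc : ContinuousOn (OscAux.fd (α^2)) (Icc (-m) m) := fun u hu =>
    (OscAux.continuousAt_fd (hmem4 u hu)).continuousWithinAt
  obtain ⟨Mf0, hMf0⟩ := isCompact_Icc.exists_bound_of_continuousOn hfc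
  obtain ⟨Mg0, hMg0⟩ := isCompact_Icc.exists_bound_of_continuousOn hgc
  obtain ⟨Mf, hMfdef⟩ : ∃ Mf, Mf = max Mf0 1 := ⟨_, rfl⟩
  obtain ⟨Mg, hMgdef⟩ : ∃ Mg, Mg = max Mg0 1 := ⟨_, rfl⟩
  have hMf1 : 1 ≤ Mf := hMfdef ▸ le_max_right _ _
  have hMg1 : 1 ≤ Mg := hMgdef ▸ le_max_right _ _
  have hMf : ∀ u ∈ Icc (-m) m, |OscAux.f (α^2) u| ≤ Mf := fun u hu =>
    le_trans (Real.norm_eq_abs _ ▸ hMf0 u hu) (hMfdef ▸ le_max_left _ _)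
  have hMg : ∀ u ∈ Icc (-m) m, |OscAux.fd (α^2) u| ≤ Mg := fun u hu =>
    le_trans (Real.norm_eq_abs _ ▸ hMg0 u hu) (hMgdef ▸ le_max_left _ _)
  -- constants
  obtain ⟨δ, hδdef⟩ : ∃ δ:ℝ, δ = 4 - m^2 := ⟨_, rfl⟩
  obtain ⟨A, hA⟩ : ∃ A:ℝ, A = 2 + α^2 + 3/2 := ⟨_, rfl⟩
  obtain ⟨D, hD⟩ : ∃ D:ℝ, D = (4*(1+α^2)+2*A/Real.sqrt δ)/δ := ⟨_, rfl⟩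
  obtain ⟨C₄, hC₄⟩ : ∃ C₄:ℝ, C₄ = (Mg*A/Real.sqrt δ + Mf*D)*64/δ^2 := ⟨_, rfl⟩
  obtain ⟨N₀, hN₀⟩ : ∃ N₀:ℕ, N₀ = ⌈4*(α^2+3/2)/δ⌉₊ + 1 := ⟨_, rfl⟩
  have hN₀1 : 1 ≤ (N₀:ℝ) := by
    have : 1 ≤ N₀ := by omega
    exact_mod_cast this
  obtain ⟨C, hC⟩ : ∃ C:ℝ, C = max (16*Mf/δ + 2*C₄) (2*Mf*(N₀:ℝ)) := ⟨_, rfl⟩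
  have hC0 : 0 < C := by
    have : (2:ℝ) ≤ 2*Mf*(N₀:ℝ) := by nlinarith
    rw [hC]; exact lt_of_lt_of_le (by linarith) (le_max_right _ _)
  refine ⟨C, hC0, ?_⟩
  intro N hN x hxK
  have hx : |x| ≤ m := hKm x hxK
  have hN1 : (1:ℝ) ≤ (N:ℝ) := by exact_mod_cast hN
  have hNpos : (0:ℝ) < (N:ℝ) := by linarith
  have hrepr : ∀ u:ℝ, Real.exp (α^2*u^2/8) / (4 - u^2)^((1:ℝ)/4) *
      Real.cos ((N + α^2)/4 * (u * Real.sqrt (4 - u^2))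
        - N * Real.arccos (u/2) - (3/2) * Real.arcsin (u/2))
      = OscAux.f (α^2) u * Real.cos (OscAux.ph (α^2) (N:ℝ) u) := fun u => rfl
  simp only [hrepr]
  by_cases hbig : (N₀:ℝ) ≤ (N:ℝ)
  · -- large N : key lemma
    have hT : 4*(α^2+3/2)/δ ≤ (N:ℝ) := by
      refine le_trans (Nat.le_ceil _) (le_trans ?_ hbig)
      rw [hN₀]; push_cast; linarith
    have hkey := OscAux.key (α^2) ha m hm0 hm2 Mf Mg hMf1 hMg1 hMf hMg
      δ A D C₄ hδdef hA hD hC₄ (N:ℝ) hN1 hT x hx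
    refine hkey.trans ?_
    have h1 : 16*Mf/δ + 2*C₄ ≤ C := hC ▸ le_max_left _ _
    exact div_le_div_of_nonneg_right h1 hNpos.le
  · -- small N : trivial bound
    push_neg at hbig
    have h0m : (0:ℝ) ∈ Icc (-m) m := by constructor <;> linarith
    have hxm : x ∈ Icc (-m) m := ⟨(abs_le.1 hx).1, (abs_le.1 hx).2⟩
    have hxsub : uIcc (0:ℝ) x ⊆ Icc (-m) m := uIcc_subset_Icc h0m hxm
    have hb : |∫ u in (0:ℝ)..x, OscAux.f (α^2) u * Real.cos (OscAux.ph (α^2) (N:ℝ) u)|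
        ≤ Mf * |x - 0| := by
      rw [← Real.norm_eq_abs]
      apply intervalIntegral.norm_integral_le_of_norm_le_const
      intro u hu
      have hum := hxsub (uIoc_subset_uIcc hu)
      rw [Real.norm_eq_abs, abs_mul]
      calc |OscAux.f (α^2) u| * |Real.cos (OscAux.ph (α^2) (N:ℝ) u)| ≤ Mf * 1 :=
            mul_le_mul (hMf u hum) (Real.abs_cos_le_one _) (abs_nonneg _) (by linarith)
        _ = Mf := mul_one _
    refine hb.trans ?_
    rw [le_div_iff₀ hNpos]
    have hx2 : |x - 0| ≤ 2 := by rw [sub_zero]; linarith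
    have h2 : 2*Mf*(N₀:ℝ) ≤ C := hC ▸ le_max_right _ _
    have hMfpos : (0:ℝ) ≤ Mf := by linarith
    have e1 : Mf * |x - 0| * (N:ℝ) ≤ Mf * 2 * (N:ℝ) :=
      mul_le_mul_of_nonneg_right (mul_le_mul_of_nonneg_left hx2 hMfpos) hNpos.le
    have e2 : Mf * 2 * (N:ℝ) ≤ 2*Mf*(N₀:ℝ) := by
      nlinarith [mul_le_mul_of_nonneg_left hbig.le (by linarith : (0:ℝ) ≤ 2*Mf)]
    linarith
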